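/- Let T' be a tree with nonnegative integer node weights, and let v be a 0-weight node of T' with a single child u. Let F(x,k) denote the maximum pseudo-entropy of a k-node summary tree of the subtree rooted at x. Then F(v, k+1) = F(u, k) for every k with 2 ≤ k ≤ |T'_v| - 1, and F(v, 1) = F(u, 1). -/

import Mathlib

/-- A rooted tree with real node weights and an ordered list of children. -/
inductive WTree where
  | node : ℝ → List WTree → WTree

mutual
/-- Total weight (size) of the subtree. -/
def WTree.wt : WTree → ℝ
  | .node w cs => w + WTree.wtList cs
def WTree.wtList : List WTree → ℝ
  | [] => 0
  | t :: ts => WTree.wt t + WTree.wtList ts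
end

mutual
/-- Number of nodes of the tree. -/
def WTree.size : WTree → ℕ
  | .node _ cs => 1 + WTree.sizeList cs
def WTree.sizeList : List WTree → ℕ
  | [] => 0
  | t :: ts => WTree.size t + WTree.sizeList ts
end

/-- A summary tree of a subtree: either the whole subtree collapsed to a single node,
or the root kept as a singleton together with, for each child, either a summary of the
child's subtree (`some s`) or membership of that child in the single group node
`other_v` (`none`). -/
inductive Summ where
  | leafAll : Summ
  | expand : List (Option Summ) → Summ

/-- `Valid t s` : `s` is a summary tree of the tree `t`. -/
inductive Valid : WTree → Summ → Prop
  | all (t : WTree) : Valid t .leafAll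
  | expand (w : ℝ) (cs : List WTree) (subs : List (Option Summ))
      (h : List.Forall₂ (fun c os => ∀ s, os = some s → Valid c s) cs subs) :
      Valid (.node w cs) (.expand subs)

mutual
/-- The number of nodes of a summary tree. -/
def Summ.count : Summ → ℕ
  | .leafAll => 1
  | .expand subs => 1 + (if subs.any Option.isNone then 1 else 0) + Summ.countList subs
def Summ.countList : List (Option Summ) → ℕ
  | [] => 0
  | none :: rest => Summ.countList rest
  | some s :: rest => Summ.count s + Summ.countList rest
end

/-- Total weight of the children placed in the group node `other_v`. -/
def otherWeight : List WTree → List (Option Summ) → ℝ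
  | _, [] => 0
  | [], _ :: _ => 0
  | c :: cs, os :: rest => (if os.isNone then WTree.wt c else 0) + otherWeight cs rest

mutual
/-- The list of node weights of a summary tree of `t`. -/
def parts : WTree → Summ → List ℝ
  | t, .leafAll => [WTree.wt t]
  | .node w cs, .expand subs =>
      w :: ((if subs.any Option.isNone then [otherWeight cs subs] else [])
        ++ partsList cs subs)
def partsList : List WTree → List (Option Summ) → List ℝ
  | _, [] => []
  | [], _ :: _ => []
  | _ :: cs, none :: rest => partsList cs rest
  | c :: cs, some s :: rest => parts c s ++ partsList cs rest
end

/-- The entropy `-Σ (Wᵢ/W)·lg(Wᵢ/W)` of a list of node weights, `W` the total weight. -/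
noncomputable def listEntropy (W : ℝ) (l : List ℝ) : ℝ :=
  -((l.map (fun x => x / W * Real.logb 2 (x / W))).sum)

/-- `AllNodes P t` : the predicate `P` (of the weight and children list) holds at every
node of `t`. -/
inductive WTree.AllNodes (P : ℝ → List WTree → Prop) : WTree → Prop
  | mk (w : ℝ) (cs : List WTree) : P w cs → (∀ c ∈ cs, WTree.AllNodes P c) →
      WTree.AllNodes P (.node w cs)

/-- `F W t k` : the maximum pseudo-entropy of a k-node summary tree of the subtree `t`,
where `W` is the total weight of the entire tree. -/
noncomputable def F (W : ℝ) (t : WTree) (k : ℕ) : ℝ :=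
  sSup {e : ℝ | ∃ s : Summ, Valid t s ∧ Summ.count s = k ∧ e = listEntropy W (parts t s)}

/-! A summary tree of `v = node 0 [u]` is `v` collapsed to one node, `v` with `u` in its group
node (two nodes), or `v` above a summary of `u`. The last kind has one node more than the summary
of `u`, and that node has weight 0, so it adds nothing to the entropy; for `k ≥ 2` the first two
kinds have too few nodes. A one-node summary of either tree has the single part `wt u`. -/

lemma Summ.one_le_count (s : Summ) : 1 ≤ s.count := by
  cases s with
  | leafAll => simp [Summ.count]
  | expand subs => simp only [Summ.count]; omega

lemma Summ.count_expand_none_singleton : (Summ.expand [none]).count = 2 := rfl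

lemma Summ.count_expand_some_singleton (s : Summ) :
    (Summ.expand [some s]).count = s.count + 1 := by
  change 1 + 0 + (s.count + 0) = _
  omega

lemma valid_node_singleton_iff {w : ℝ} {c : WTree} {s : Summ} :
    Valid (.node w [c]) s ↔
      s = .leafAll ∨ s = .expand [none] ∨ ∃ s', Valid c s' ∧ s = .expand [some s'] := by
  constructor
  · rintro (_ | ⟨_, _, subs, h⟩)
    · exact Or.inl rfl
    · rcases h with _ | ⟨hc, h₂⟩
      cases h₂
      rename_i os
      cases os with
      | none => exact Or.inr (Or.inl rfl)
      | some s' => exact Or.inr (Or.inr ⟨s', hc s' rfl, rfl⟩)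
  · rintro (rfl | rfl | ⟨s', hs', rfl⟩)
    · exact Valid.all _
    · exact Valid.expand w [c] [none] (.cons (fun _ h => nomatch h) .nil)
    · exact Valid.expand w [c] [some s'] (.cons (fun _ h => Option.some_inj.1 h ▸ hs') .nil)

lemma WTree.wt_node_singleton (w : ℝ) (c : WTree) : (WTree.node w [c]).wt = w + c.wt := by
  simp [WTree.wt, WTree.wtList]

lemma parts_node_singleton_some (w : ℝ) (c : WTree) (s : Summ) :
    parts (.node w [c]) (.expand [some s]) = w :: parts c s := by
  simp [parts, partsList]

lemma listEntropy_zero_cons (W : ℝ) (l : List ℝ) :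
    listEntropy W (0 :: l) = listEntropy W l := by
  simp [listEntropy]

lemma parts_leafAll (t : WTree) : parts t .leafAll = [t.wt] := by
  rw [parts]

lemma parts_eq_singleton_of_count_eq_one {t : WTree} {s : Summ} (hs : Valid t s)
    (hc : s.count = 1) : parts t s = [t.wt] := by
  rcases hs with _ | ⟨w, cs, subs, h⟩
  · exact parts_leafAll t
  · obtain rfl : subs = [] := by
      rcases subs with _ | ⟨_ | s', rest⟩
      · rfl
      · change 1 + 1 + Summ.countList rest = 1 at hc
        omega
      · have := s'.one_le_count
        change 1 + _ + (s'.count + Summ.countList rest) = 1 at hc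
        omega
    obtain rfl := List.forall₂_nil_right_iff.1 h
    simp [parts, partsList, WTree.wt, WTree.wtList]

lemma F_congr {W : ℝ} {t t' : WTree} {k k' : ℕ}
    (h : ∀ s, Valid t s → s.count = k →
      ∃ s', Valid t' s' ∧ s'.count = k' ∧ listEntropy W (parts t s) = listEntropy W (parts t' s'))
    (h' : ∀ s', Valid t' s' → s'.count = k' →
      ∃ s, Valid t s ∧ s.count = k ∧ listEntropy W (parts t s) = listEntropy W (parts t' s')) :
    F W t k = F W t' k' := by
  unfold F
  congr 1
  ext e
  constructor
  · rintro ⟨s, hs, hc, rfl⟩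
    exact h s hs hc
  · rintro ⟨s', hs', hc', rfl⟩
    obtain ⟨s, hs, hc, he⟩ := h' s' hs' hc'
    exact ⟨s, hs, hc, he.symm⟩

/-- For a 0-weight node `v` with a single child `u` (here `v` is `WTree.node 0 [u]`),
in a tree with nonnegative integer weights: `F(v, k+1) = F(u, k)` for
`2 ≤ k ≤ |T'_v| - 1`, and `F(v, 1) = F(u, 1)`. -/
theorem zero_weight_single_child (u : WTree)
    (hint : WTree.AllNodes (fun w _ => ∃ m : ℕ, w = (m : ℝ)) (WTree.node 0 [u]))
    (W : ℝ) (hW : 0 < W) :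
    (∀ k : ℕ, 2 ≤ k → k ≤ WTree.size (WTree.node 0 [u]) - 1 →
      F W (WTree.node 0 [u]) (k + 1) = F W u k) ∧
    F W (WTree.node 0 [u]) 1 = F W u 1 := by
  refine ⟨fun k hk _ => F_congr ?_ ?_, F_congr ?_ ?_⟩
  · intro s hs hc
    rcases valid_node_singleton_iff.1 hs with rfl | rfl | ⟨s', hs', rfl⟩
    · change 1 = k + 1 at hc; omega
    · rw [Summ.count_expand_none_singleton] at hc; omega
    · refine ⟨s', hs', ?_, ?_⟩
      · rw [Summ.count_expand_some_singleton] at hc; omega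
      · rw [parts_node_singleton_some, listEntropy_zero_cons]
  · intro s hs hc
    refine ⟨.expand [some s], valid_node_singleton_iff.2 (.inr (.inr ⟨s, hs, rfl⟩)), ?_, ?_⟩
    · rw [Summ.count_expand_some_singleton, hc]
    · rw [parts_node_singleton_some, listEntropy_zero_cons]
  · intro s hs hc
    refine ⟨.leafAll, Valid.all u, rfl, ?_⟩
    rw [parts_eq_singleton_of_count_eq_one hs hc, parts_leafAll, WTree.wt_node_singleton,
      zero_add]
  · intro s hs hc
    refine ⟨.leafAll, Valid.all _, rfl, ?_⟩
    rw [parts_eq_singleton_of_count_eq_one hs hc, parts_leafAll, WTree.wt_node_singleton,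
      zero_add]
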